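/- arXiv:math/9810190 — 2 statements merged into one kernel-verified Lean document; each statement's English description precedes it below -/
import Mathlib

section
/- Sapir's group K, defined by the presentation ⟨a,b,r,t,x,z | xaxa=t, bxbx=t, bbtaa=t, a⁻¹br=ra⁻¹b, zt=tz, btaz=zbta⟩, is isomorphic to the group defined by the presentation ⟨u,v,b,r,z | u²=v², bvbu=b⁻¹ub⁻¹v, u⁻¹b⁻¹vbr=ru⁻¹b⁻¹vb, zu²=u²z, zbvbu=bvbuz⟩, via the correspondence u=xa, v=bx, t=bxbx. -/
/-- Generators a, b, r, t, x, z of the original presentation of Sapir's group K. -/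
inductive Gen6 : Type
  | a | b | r | t | x | z
  deriving DecidableEq

/-- Relators of ⟨a,b,r,t,x,z | xaxa=t, bxbx=t, bbtaa=t, a⁻¹br=ra⁻¹b, zt=tz, btaz=zbta⟩. -/
def rels6 : Set (FreeGroup Gen6) :=
  letI a := FreeGroup.of Gen6.a
  letI b := FreeGroup.of Gen6.b
  letI r := FreeGroup.of Gen6.r
  letI t := FreeGroup.of Gen6.t
  letI x := FreeGroup.of Gen6.x
  letI z := FreeGroup.of Gen6.z
  { x * a * x * a * t⁻¹,
    b * x * b * x * t⁻¹,
    b * b * t * a * a * t⁻¹,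
    a⁻¹ * b * r * (r * a⁻¹ * b)⁻¹,
    z * t * (t * z)⁻¹,
    b * t * a * z * (z * b * t * a)⁻¹ }

/-- Generators u, v, b, r, z of the final presentation. -/
inductive Gen5 : Type
  | u | v | b | r | z
  deriving DecidableEq

/-- Relators of ⟨u,v,b,r,z | u²=v², bvbu=b⁻¹ub⁻¹v, u⁻¹b⁻¹vbr=ru⁻¹b⁻¹vb, zu²=u²z,
    zbvbu=bvbuz⟩. -/
def rels5 : Set (FreeGroup Gen5) :=
  letI u := FreeGroup.of Gen5.u
  letI v := FreeGroup.of Gen5.v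
  letI b := FreeGroup.of Gen5.b
  letI r := FreeGroup.of Gen5.r
  letI z := FreeGroup.of Gen5.z
  { u ^ 2 * (v ^ 2)⁻¹,
    b * v * b * u * (b⁻¹ * u * b⁻¹ * v)⁻¹,
    u⁻¹ * b⁻¹ * v * b * r * (r * u⁻¹ * b⁻¹ * v * b)⁻¹,
    z * u ^ 2 * (u ^ 2 * z)⁻¹,
    z * b * v * b * u * (b * v * b * u * z)⁻¹ }

/-! The substitutions u = xa, v = bx in one direction and a = v⁻¹bu, x = b⁻¹v, t = v² in the
other carry each set of relations to consequences of the other (for instance bvbu = b⁻¹ub⁻¹v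
becomes bta = b⁻¹ta⁻¹, i.e. bbtaa = t), and the composites fix every generator, using bxbx = t
for t. -/

namespace PresentedGroup

variable {α β : Type*} {rels : Set (FreeGroup α)} {rels' : Set (FreeGroup β)}

theorem lift_of_eq_one_of_mem {w : FreeGroup α} (hw : w ∈ rels) :
    FreeGroup.lift (of : α → PresentedGroup rels) w = 1 := by
  rw [show FreeGroup.lift (of : α → PresentedGroup rels) = mk rels from
    FreeGroup.ext_hom _ _ fun _ => rfl]
  exact one_of_mem hw

variable {f : α → PresentedGroup rels'} {g : β → PresentedGroup rels}
  (hf : ∀ w ∈ rels, FreeGroup.lift f w = 1) (hg : ∀ w ∈ rels', FreeGroup.lift g w = 1)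
  (hgf : ∀ x, toGroup hg (f x) = of x) (hfg : ∀ y, toGroup hf (g y) = of y)

def mulEquivOfGenerators : PresentedGroup rels ≃* PresentedGroup rels' :=
  (toGroup hf).toMulEquiv (toGroup hg) (ext fun x => by simp [hgf]) (ext fun y => by simp [hfg])

@[simp]
theorem mulEquivOfGenerators_of (x : α) : mulEquivOfGenerators hf hg hgf hfg (of x) = f x :=
  toGroup.of hf

end PresentedGroup

namespace Sapir

variable {G : Type*} [Group G]

structure KRelations (a b r t x z : G) : Prop where
  xaxa : x * a * x * a = t
  bxbx : b * x * b * x = t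
  bbtaa : b * b * t * a * a = t
  comm_r : a⁻¹ * b * r = r * a⁻¹ * b
  comm_zt : z * t = t * z
  comm_z_bta : b * t * a * z = z * b * t * a

structure FinalRelations (u v b r z : G) : Prop where
  sq_eq : u ^ 2 = v ^ 2
  bvbu : b * v * b * u = b⁻¹ * u * b⁻¹ * v
  comm_r : u⁻¹ * b⁻¹ * v * b * r = r * u⁻¹ * b⁻¹ * v * b
  comm_z_sq : z * u ^ 2 = u ^ 2 * z
  comm_z_bvbu : z * b * v * b * u = b * v * b * u * z

theorem lift_rels6_eq_one_iff (f : Gen6 → G) :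
    (∀ w ∈ rels6, FreeGroup.lift f w = 1) ↔
      KRelations (f .a) (f .b) (f .r) (f .t) (f .x) (f .z) := by
  simp only [rels6, Set.mem_insert_iff, Set.mem_singleton_iff, forall_eq_or_imp, forall_eq,
    map_mul, map_inv, FreeGroup.lift_apply_of, mul_inv_eq_one]
  exact ⟨fun ⟨h₁, h₂, h₃, h₄, h₅, h₆⟩ => ⟨h₁, h₂, h₃, h₄, h₅, h₆⟩,
    fun ⟨h₁, h₂, h₃, h₄, h₅, h₆⟩ => ⟨h₁, h₂, h₃, h₄, h₅, h₆⟩⟩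

theorem lift_rels5_eq_one_iff (f : Gen5 → G) :
    (∀ w ∈ rels5, FreeGroup.lift f w = 1) ↔
      FinalRelations (f .u) (f .v) (f .b) (f .r) (f .z) := by
  simp only [rels5, Set.mem_insert_iff, Set.mem_singleton_iff, forall_eq_or_imp, forall_eq,
    map_mul, map_inv, map_pow, FreeGroup.lift_apply_of, mul_inv_eq_one]
  exact ⟨fun ⟨h₁, h₂, h₃, h₄, h₅⟩ => ⟨h₁, h₂, h₃, h₄, h₅⟩,
    fun ⟨h₁, h₂, h₃, h₄, h₅⟩ => ⟨h₁, h₂, h₃, h₄, h₅⟩⟩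

theorem KRelations.sq_xa {a b r t x z : G} (h : KRelations a b r t x z) : (x * a) ^ 2 = t := by
  rw [sq, ← h.xaxa]; group

theorem KRelations.sq_bx {a b r t x z : G} (h : KRelations a b r t x z) : (b * x) ^ 2 = t := by
  rw [sq, ← h.bxbx]; group

theorem KRelations.toFinal {a b r t x z : G} (h : KRelations a b r t x z) :
    FinalRelations (x * a) (b * x) b r z := by
  have hbvbu : b * (b * x) * b * (x * a) = b * t * a := by rw [← h.bxbx]; group
  have hbta : b * t * a = b⁻¹ * t * a⁻¹ := by
    conv_rhs => rw [← h.bbtaa]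
    group
  refine ⟨h.sq_xa.trans h.sq_bx.symm, ?_, ?_, ?_, ?_⟩
  · rw [hbvbu, hbta, ← h.xaxa]; group
  · calc (x * a)⁻¹ * b⁻¹ * (b * x) * b * r = a⁻¹ * b * r := by group
      _ = r * a⁻¹ * b := h.comm_r
      _ = r * (x * a)⁻¹ * b⁻¹ * (b * x) * b := by group
  · rw [h.sq_xa, h.comm_zt]
  · calc z * b * (b * x) * b * (x * a) = z * b * t * a := by rw [← h.bxbx]; group
      _ = b * t * a * z := h.comm_z_bta.symm
      _ = b * (b * x) * b * (x * a) * z := by rw [hbvbu]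

theorem FinalRelations.toK {u v b r z : G} (h : FinalRelations u v b r z) :
    KRelations (v⁻¹ * b * u) b r (v ^ 2) (b⁻¹ * v) z := by
  have hbvbu : b * v ^ 2 * (v⁻¹ * b * u) = b * v * b * u := by group
  refine ⟨?_, by rw [sq]; group, ?_, ?_, ?_, ?_⟩
  · rw [← h.sq_eq, sq]; group
  · calc b * b * v ^ 2 * (v⁻¹ * b * u) * (v⁻¹ * b * u)
        = b * (b * v * b * u) * (v⁻¹ * b * u) := by group
      _ = u ^ 2 := by rw [h.bvbu, sq]; group
      _ = v ^ 2 := h.sq_eq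
  · calc (v⁻¹ * b * u)⁻¹ * b * r = u⁻¹ * b⁻¹ * v * b * r := by group
      _ = r * u⁻¹ * b⁻¹ * v * b := h.comm_r
      _ = r * (v⁻¹ * b * u)⁻¹ * b := by group
  · rw [← h.sq_eq, h.comm_z_sq]
  · calc b * v ^ 2 * (v⁻¹ * b * u) * z = b * v * b * u * z := by rw [hbvbu]
      _ = z * b * v * b * u := h.comm_z_bvbu.symm
      _ = z * b * v ^ 2 * (v⁻¹ * b * u) := by group

open PresentedGroup

theorem kRelations_of :
    KRelations (of .a : PresentedGroup rels6) (of .b) (of .r) (of .t) (of .x) (of .z) :=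
  (lift_rels6_eq_one_iff of).1 fun _ => lift_of_eq_one_of_mem

theorem finalRelations_of :
    FinalRelations (of .u : PresentedGroup rels5) (of .v) (of .b) (of .r) (of .z) :=
  (lift_rels5_eq_one_iff of).1 fun _ => lift_of_eq_one_of_mem

def finalToK : Gen5 → PresentedGroup rels6
  | .u => of .x * of .a
  | .v => of .b * of .x
  | .b => of .b
  | .r => of .r
  | .z => of .z

def kToFinal : Gen6 → PresentedGroup rels5
  | .a => (of .v)⁻¹ * of .b * of .u
  | .b => of .b
  | .r => of .r
  | .t => of .v ^ 2
  | .x => (of .b)⁻¹ * of .v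
  | .z => of .z

theorem lift_finalToK_eq_one : ∀ w ∈ rels5, FreeGroup.lift finalToK w = 1 :=
  (lift_rels5_eq_one_iff _).2 kRelations_of.toFinal

theorem lift_kToFinal_eq_one : ∀ w ∈ rels6, FreeGroup.lift kToFinal w = 1 :=
  (lift_rels6_eq_one_iff _).2 finalRelations_of.toK

theorem toGroup_finalToK (g : Gen5) : toGroup lift_kToFinal_eq_one (finalToK g) = of g := by
  cases g <;> simp [finalToK, kToFinal, mul_assoc]

theorem toGroup_kToFinal (g : Gen6) : toGroup lift_finalToK_eq_one (kToFinal g) = of g := by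
  cases g <;> simp [finalToK, kToFinal]
  exact kRelations_of.sq_bx

def equiv : PresentedGroup rels5 ≃* PresentedGroup rels6 :=
  mulEquivOfGenerators lift_finalToK_eq_one lift_kToFinal_eq_one toGroup_finalToK toGroup_kToFinal

theorem equiv_of (g : Gen5) : equiv (of g) = finalToK g :=
  mulEquivOfGenerators_of ..

end Sapir

/-- Sapir's group K is isomorphic to the group with the final presentation, via the
correspondence u = xa, v = bx (so that t = bxbx), with b, r, z corresponding to
themselves. -/
theorem sapir_final_presentation :
    ∃ e : PresentedGroup rels5 ≃* PresentedGroup rels6,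
      e (PresentedGroup.of Gen5.u) =
        PresentedGroup.of Gen6.x * PresentedGroup.of Gen6.a ∧
      e (PresentedGroup.of Gen5.v) =
        PresentedGroup.of Gen6.b * PresentedGroup.of Gen6.x ∧
      e (PresentedGroup.of Gen5.b) = PresentedGroup.of Gen6.b ∧
      e (PresentedGroup.of Gen5.r) = PresentedGroup.of Gen6.r ∧
      e (PresentedGroup.of Gen5.z) = PresentedGroup.of Gen6.z ∧
      e (PresentedGroup.of Gen5.v ^ 2) = PresentedGroup.of Gen6.t := by
  have h := Sapir.equiv_of
  exact ⟨Sapir.equiv, h .u, h .v, h .b, h .r, h .z,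
    by rw [map_pow, h .v]; exact Sapir.kRelations_of.sq_bx⟩
end

section
/- Let G be the group defined by the presentation ⟨u,v,b,r | u²=v², bvbu=b⁻¹ub⁻¹v, u⁻¹b⁻¹vbr=ru⁻¹b⁻¹vb⟩. Then the elements u² and bvbu of G freely generate the subgroup H=⟨u², bvbu⟩ of G; that is, the homomorphism from the free group of rank 2 to G sending the two free generators to u² and bvbu respectively is injective, so H is a free group of rank 2. -/
/-- Generators u, v, b, r of the group G. -/
inductive GenG : Type
  | u | v | b | r
  deriving DecidableEq

/-- Relators of G = ⟨u,v,b,r | u²=v², bvbu=b⁻¹ub⁻¹v, u⁻¹b⁻¹vbr=ru⁻¹b⁻¹vb⟩. -/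
def relsG : Set (FreeGroup GenG) :=
  letI u := FreeGroup.of GenG.u
  letI v := FreeGroup.of GenG.v
  letI b := FreeGroup.of GenG.b
  letI r := FreeGroup.of GenG.r
  { u ^ 2 * (v ^ 2)⁻¹,
    b * v * b * u * (b⁻¹ * u * b⁻¹ * v)⁻¹,
    u⁻¹ * b⁻¹ * v * b * r * (r * u⁻¹ * b⁻¹ * v * b)⁻¹ }

/-- The group G. -/
def G : Type := PresentedGroup relsG

instance : Group G := by unfold G; infer_instance

/-- The element u² of G. -/
def h₁ : G := PresentedGroup.of GenG.u ^ 2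

/-- The element bvbu of G. -/
def h₂ : G :=
  PresentedGroup.of GenG.b * PresentedGroup.of GenG.v *
    PresentedGroup.of GenG.b * PresentedGroup.of GenG.u

/-! ### Auxiliary material: a linear representation of `G` and the ping-pong lemma. -/

open Pointwise

noncomputable section PingPongAux

abbrev SL2 := Matrix.SpecialLinearGroup (Fin 2) ℝ

def mU : SL2 := ⟨!![1, 2; 0, 1], by norm_num [Matrix.det_fin_two_of]⟩
def mV : SL2 := ⟨!![-1, -2; 0, -1], by norm_num [Matrix.det_fin_two_of]⟩
def mB : SL2 := ⟨!![2, -4; 5/4, -2], by norm_num [Matrix.det_fin_two_of]⟩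
def mBi : SL2 := ⟨!![-2, 4; -5/4, 2], by norm_num [Matrix.det_fin_two_of]⟩
def s₁ : SL2 := ⟨!![1, 4; 0, 1], by norm_num [Matrix.det_fin_two_of]⟩
def s₁i : SL2 := ⟨!![1, -4; 0, 1], by norm_num [Matrix.det_fin_two_of]⟩
def s₂ : SL2 := ⟨!![-4, 0; -25/8, -1/4], by norm_num [Matrix.det_fin_two_of]⟩
def s₂i : SL2 := ⟨!![-1/4, 0; 25/8, -4], by norm_num [Matrix.det_fin_two_of]⟩

lemma SL2_ext {A B : SL2} (h : ∀ i j, (A : Matrix (Fin 2) (Fin 2) ℝ) i j = (B : Matrix (Fin 2) (Fin 2) ℝ) i j) : A = B :=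
  Subtype.ext (by ext i j; exact h i j)

lemma e1 : mU * mU = mV * mV := by
  apply SL2_ext; intro i j
  simp only [Matrix.SpecialLinearGroup.coe_mul]
  fin_cases i <;> fin_cases j <;>
    simp [mU, mV, Matrix.SpecialLinearGroup.coe_mul, Matrix.mul_apply, Fin.sum_univ_two]

lemma hBi : mB⁻¹ = mBi := by
  apply inv_eq_of_mul_eq_one_right
  apply SL2_ext; intro i j
  simp only [Matrix.SpecialLinearGroup.coe_mul]
  fin_cases i <;> fin_cases j <;>
    simp [mB, mBi, Matrix.SpecialLinearGroup.coe_mul, Matrix.SpecialLinearGroup.coe_one,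
      Matrix.mul_apply, Fin.sum_univ_two, Matrix.one_apply] <;>
    norm_num

lemma e2 : mB * mV * mB * mU = mBi * mU * mBi * mV := by
  apply SL2_ext; intro i j
  simp only [Matrix.SpecialLinearGroup.coe_mul]
  fin_cases i <;> fin_cases j <;>
    simp [mB, mBi, mU, mV, Matrix.SpecialLinearGroup.coe_mul, Matrix.mul_apply,
      Fin.sum_univ_two] <;>
    norm_num

lemma hs₁i : s₁⁻¹ = s₁i := by
  apply inv_eq_of_mul_eq_one_right
  apply SL2_ext; intro i j
  simp only [Matrix.SpecialLinearGroup.coe_mul]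
  fin_cases i <;> fin_cases j <;>
    simp [s₁, s₁i, Matrix.SpecialLinearGroup.coe_mul, Matrix.SpecialLinearGroup.coe_one,
      Matrix.mul_apply, Fin.sum_univ_two, Matrix.one_apply] <;> norm_num

lemma hs₂i : s₂⁻¹ = s₂i := by
  apply inv_eq_of_mul_eq_one_right
  apply SL2_ext; intro i j
  simp only [Matrix.SpecialLinearGroup.coe_mul]
  fin_cases i <;> fin_cases j <;>
    simp [s₂, s₂i, Matrix.SpecialLinearGroup.coe_mul, Matrix.SpecialLinearGroup.coe_one,
      Matrix.mul_apply, Fin.sum_univ_two, Matrix.one_apply] <;> norm_num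

lemma e_s₁ : mU * mU = s₁ := by
  apply SL2_ext; intro i j
  simp only [Matrix.SpecialLinearGroup.coe_mul]
  fin_cases i <;> fin_cases j <;>
    simp [mU, s₁, Matrix.SpecialLinearGroup.coe_mul, Matrix.mul_apply, Fin.sum_univ_two] <;>
    norm_num

lemma e_s₂ : mB * mV * mB * mU = s₂ := by
  apply SL2_ext; intro i j
  simp only [Matrix.SpecialLinearGroup.coe_mul]
  fin_cases i <;> fin_cases j <;>
    simp [mB, mV, mU, s₂, Matrix.SpecialLinearGroup.coe_mul, Matrix.mul_apply,
      Fin.sum_univ_two] <;> norm_num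

/-- Nonzero vectors in the plane. -/
def PV : Type := {p : Fin 2 → ℝ // p ≠ 0}

def act (A : SL2) (p : PV) : PV :=
  ⟨![A.1 0 0 * p.1 0 + A.1 0 1 * p.1 1, A.1 1 0 * p.1 0 + A.1 1 1 * p.1 1], by
    intro h
    have h0 : A.1 0 0 * p.1 0 + A.1 0 1 * p.1 1 = 0 := by
      have := congrFun h 0; simpa using this
    have h1 : A.1 1 0 * p.1 0 + A.1 1 1 * p.1 1 = 0 := by
      have := congrFun h 1; simpa using this
    have hdet : A.1 0 0 * A.1 1 1 - A.1 0 1 * A.1 1 0 = 1 := by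
      have := A.2; rwa [Matrix.det_fin_two] at this
    have hx : p.1 0 = 0 := by
      linear_combination A.1 1 1 * h0 - A.1 0 1 * h1 - p.1 0 * hdet
    have hy : p.1 1 = 0 := by
      linear_combination -A.1 1 0 * h0 + A.1 0 0 * h1 - p.1 1 * hdet
    apply p.2
    funext i
    fin_cases i <;> simp [hx, hy]⟩

instance : MulAction SL2 PV where
  smul := act
  one_smul p := Subtype.ext (by
    show (act 1 p).1 = p.1
    funext i
    fin_cases i <;>
      simp [act, Matrix.SpecialLinearGroup.coe_one, Matrix.one_apply])
  mul_smul A B p := Subtype.ext (by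
    show (act (A * B) p).1 = (act A (act B p)).1
    funext i
    fin_cases i <;>
      simp [act, Matrix.SpecialLinearGroup.coe_mul, Matrix.mul_apply, Fin.sum_univ_two] <;> ring)

lemma act_val (A : SL2) (p : PV) :
    (A • p).1 = ![A.1 0 0 * p.1 0 + A.1 0 1 * p.1 1, A.1 1 0 * p.1 0 + A.1 1 1 * p.1 1] := rfl

lemma s₁_smul (p : PV) : (s₁ • p).1 = ![p.1 0 + 4 * p.1 1, p.1 1] := by
  rw [act_val]; funext i; fin_cases i <;> simp [s₁] <;> ring

lemma s₁i_smul (p : PV) : (s₁i • p).1 = ![p.1 0 - 4 * p.1 1, p.1 1] := by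
  rw [act_val]; funext i; fin_cases i <;> simp [s₁i] <;> ring

lemma s₂_smul (p : PV) :
    (s₂ • p).1 = ![-(4 * p.1 0), -(25 / 8 * p.1 0 + 1 / 4 * p.1 1)] := by
  rw [act_val]; funext i; fin_cases i <;> simp [s₂] <;> ring

lemma s₂i_smul (p : PV) :
    (s₂i • p).1 = ![-(1 / 4 * p.1 0), 25 / 8 * p.1 0 - 4 * p.1 1] := by
  rw [act_val]; funext i; fin_cases i <;> simp [s₂i] <;> ring

def X0 : Set PV := {p | p.1 1 = 0 ∨ 0 < p.1 1 * (10 * p.1 0 - 19 * p.1 1)}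
def Y0 : Set PV := {p | p.1 1 * (10 * p.1 0 + 19 * p.1 1) < 0}
def X1 : Set PV :=
  {p | p.1 1 ≠ 0 ∧ 0 ≤ p.1 1 * (33 * p.1 0 - 32 * p.1 1) ∧
    p.1 1 * (17 * p.1 0 - 32 * p.1 1) ≤ 0}
def Y1 : Set PV := {p | 16 * p.1 0 ^ 2 < p.1 1 ^ 2}

lemma sq_pos' {y : ℝ} (h : y ≠ 0) : 0 < y ^ 2 :=
  lt_of_le_of_ne (sq_nonneg y) (Ne.symm (pow_ne_zero 2 h))

lemma fst_ne {p : PV} (h : p.1 1 = 0) : p.1 0 ≠ 0 := by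
  intro h0
  apply p.2
  funext i
  fin_cases i <;> simp [h, h0]

lemma dX0X1 : Disjoint X0 X1 := by
  rw [Set.disjoint_left]
  rintro p hp ⟨hy, hA, hC⟩
  rcases hp with h0 | h0
  · exact hy h0
  · nlinarith [sq_nonneg (p.1 1)]

lemma dY0Y1 : Disjoint Y0 Y1 := by
  rw [Set.disjoint_left]
  intro p hp hq
  simp only [Y0, Y1, Set.mem_setOf_eq] at hp hq
  nlinarith [sq_nonneg (5 * p.1 0 + p.1 1), sq_nonneg (p.1 0)]

lemma dX0Y0 : Disjoint X0 Y0 := by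
  rw [Set.disjoint_left]
  intro p hp hq
  simp only [X0, Y0, Set.mem_setOf_eq] at hp hq
  rcases hp with h0 | h0
  · rw [h0] at hq; nlinarith
  · nlinarith [sq_nonneg (p.1 1)]

lemma dX0Y1 : Disjoint X0 Y1 := by
  rw [Set.disjoint_left]
  intro p hp hq
  simp only [X0, Y1, Set.mem_setOf_eq] at hp hq
  rcases hp with h0 | h0
  · rw [h0] at hq; nlinarith [sq_nonneg (p.1 0)]
  · nlinarith [sq_nonneg (5 * p.1 0 - p.1 1), sq_nonneg (p.1 0)]

lemma dX1Y0 : Disjoint X1 Y0 := by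
  rw [Set.disjoint_left]
  rintro p ⟨hy, hA, hC⟩ hq
  simp only [Y0, Set.mem_setOf_eq] at hq
  nlinarith [sq_pos' hy]

lemma dX1Y1 : Disjoint X1 Y1 := by
  rw [Set.disjoint_left]
  rintro p ⟨hy, hA, hC⟩ hq
  simp only [Y1, Set.mem_setOf_eq] at hq
  nlinarith [sq_nonneg (33 * p.1 0 - 16 * p.1 1), sq_pos' hy]

lemma memX0 : (⟨![1, 0], fun h => by simpa using congrFun h 0⟩ : PV) ∈ X0 :=
  Or.inl (by norm_num)

lemma memX1 : (⟨![1, 1], fun h => by simpa using congrFun h 0⟩ : PV) ∈ X1 := by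
  refine ⟨by norm_num, by norm_num, by norm_num⟩

lemma hX0' : s₁ • Y0ᶜ ⊆ X0 := by
  rintro q ⟨p, hp, rfl⟩
  simp only [Set.mem_compl_iff, Y0, Set.mem_setOf_eq, not_lt] at hp
  show _ ∈ X0
  simp only [X0, Set.mem_setOf_eq, s₁_smul, Matrix.cons_val_zero, Matrix.cons_val_one,
    Matrix.head_cons]
  by_cases hy : p.1 1 = 0
  · exact Or.inl hy
  · right; nlinarith [sq_pos' hy]

lemma hX1' : s₂ • Y1ᶜ ⊆ X1 := by
  rintro q ⟨p, hp, rfl⟩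
  simp only [Set.mem_compl_iff, Y1, Set.mem_setOf_eq, not_lt] at hp
  show _ ∈ X1
  simp only [X1, Set.mem_setOf_eq, s₂_smul, Matrix.cons_val_zero, Matrix.cons_val_one,
    Matrix.head_cons]
  refine ⟨?_, ?_, ?_⟩
  · intro h
    have hx : p.1 0 = 0 := by nlinarith [sq_nonneg (p.1 0)]
    have hy : p.1 1 = 0 := by
      rw [hx] at h; linarith [h]
    exact fst_ne hy hx
  · rcases le_or_gt 0 (p.1 0) with hx | hx
    · have h4 : p.1 1 ≤ 4 * p.1 0 := by nlinarith
      have h5 : -(4 * p.1 0) ≤ p.1 1 := by nlinarith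
      nlinarith [mul_nonneg (by linarith : (0:ℝ) ≤ 25 * p.1 0 + 2 * p.1 1)
        (by linarith : (0:ℝ) ≤ 4 * p.1 0 - p.1 1)]
    · have h4 : 4 * p.1 0 ≤ p.1 1 := by nlinarith
      have h5 : p.1 1 ≤ -(4 * p.1 0) := by nlinarith
      nlinarith [mul_nonneg (by linarith : (0:ℝ) ≤ -(25 * p.1 0 + 2 * p.1 1))
        (by linarith : (0:ℝ) ≤ p.1 1 - 4 * p.1 0)]
  · rcases le_or_gt 0 (p.1 0) with hx | hx
    · have h4 : p.1 1 ≤ 4 * p.1 0 := by nlinarith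
      have h5 : -(4 * p.1 0) ≤ p.1 1 := by nlinarith
      nlinarith [mul_nonneg (by linarith : (0:ℝ) ≤ 25 * p.1 0 + 2 * p.1 1)
        (by linarith : (0:ℝ) ≤ 4 * p.1 0 + p.1 1)]
    · have h4 : 4 * p.1 0 ≤ p.1 1 := by nlinarith
      have h5 : p.1 1 ≤ -(4 * p.1 0) := by nlinarith
      nlinarith [mul_nonneg (by linarith : (0:ℝ) ≤ -(25 * p.1 0 + 2 * p.1 1))
        (by linarith : (0:ℝ) ≤ -(4 * p.1 0 + p.1 1))]

lemma hY0' : s₁⁻¹ • X0ᶜ ⊆ Y0 := by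
  rw [hs₁i]
  rintro q ⟨p, hp, rfl⟩
  simp only [Set.mem_compl_iff, X0, Set.mem_setOf_eq, not_or, not_lt] at hp
  obtain ⟨hy, hle⟩ := hp
  show _ ∈ Y0
  simp only [Y0, Set.mem_setOf_eq, s₁i_smul, Matrix.cons_val_zero, Matrix.cons_val_one,
    Matrix.head_cons]
  nlinarith [sq_pos' hy]

lemma hY1' : s₂⁻¹ • X1ᶜ ⊆ Y1 := by
  rw [hs₂i]
  rintro q ⟨p, hp, rfl⟩
  simp only [Set.mem_compl_iff, X1, Set.mem_setOf_eq, not_and, not_le] at hp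
  show _ ∈ Y1
  simp only [Y1, Set.mem_setOf_eq, s₂i_smul, Matrix.cons_val_zero, Matrix.cons_val_one,
    Matrix.head_cons]
  by_cases hy : p.1 1 = 0
  · have hx := fst_ne hy
    rw [hy]
    nlinarith [sq_pos' hx]
  · by_cases hA : 0 ≤ p.1 1 * (33 * p.1 0 - 32 * p.1 1)
    · have hC := hp hy hA
      have hy2 := sq_pos' hy
      have hA' : 0 < p.1 1 * (33 * p.1 0 - 32 * p.1 1) := by nlinarith
      nlinarith [mul_pos hC hA', hy2]
    · have hA' : p.1 1 * (33 * p.1 0 - 32 * p.1 1) < 0 := lt_of_not_ge hA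
      have hC : p.1 1 * (17 * p.1 0 - 32 * p.1 1) < 0 := by nlinarith [sq_nonneg (p.1 1)]
      nlinarith [mul_pos_of_neg_of_neg hC hA', sq_pos' hy]

lemma inj_s : Function.Injective (FreeGroup.lift (![s₁, s₂] : Fin 2 → SL2)) := by
  apply FreeGroup.injective_lift_of_ping_pong (![s₁, s₂]) (![X0, X1]) (![Y0, Y1])
  · intro i
    fin_cases i
    · exact ⟨_, memX0⟩
    · exact ⟨_, memX1⟩
  · intro i j hij
    fin_cases i <;> fin_cases j <;>
      first
        | exact absurd rfl hij
        | exact dX0X1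
        | exact dX0X1.symm
  · intro i j hij
    fin_cases i <;> fin_cases j <;>
      first
        | exact absurd rfl hij
        | exact dY0Y1
        | exact dY0Y1.symm
  · intro i j
    fin_cases i <;> fin_cases j <;>
      first
        | exact dX0Y0
        | exact dX0Y1
        | exact dX1Y0
        | exact dX1Y1
  · intro i
    fin_cases i
    · exact hX0'
    · exact hX1'
  · intro i
    fin_cases i
    · exact hY0'
    · exact hY1'

def fG : GenG → SL2
  | GenG.u => mU
  | GenG.v => mV
  | GenG.b => mB
  | GenG.r => 1

lemma hrels : ∀ w ∈ relsG, FreeGroup.lift fG w = 1 := by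
  intro w hw
  simp only [relsG, Set.mem_insert_iff, Set.mem_singleton_iff] at hw
  rcases hw with rfl | rfl | rfl
  · have : (FreeGroup.lift fG) (FreeGroup.of GenG.u ^ 2 * (FreeGroup.of GenG.v ^ 2)⁻¹)
        = mU ^ 2 * (mV ^ 2)⁻¹ := by simp [fG]
    rw [this, mul_inv_eq_one, sq, sq]; exact e1
  · have : (FreeGroup.lift fG) (FreeGroup.of GenG.b * FreeGroup.of GenG.v * FreeGroup.of GenG.b
        * FreeGroup.of GenG.u * ((FreeGroup.of GenG.b)⁻¹ * FreeGroup.of GenG.u *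
        (FreeGroup.of GenG.b)⁻¹ * FreeGroup.of GenG.v)⁻¹)
        = mB * mV * mB * mU * (mB⁻¹ * mU * mB⁻¹ * mV)⁻¹ := by simp [fG]
    rw [this, mul_inv_eq_one, hBi]; exact e2
  · have : (FreeGroup.lift fG) ((FreeGroup.of GenG.u)⁻¹ * (FreeGroup.of GenG.b)⁻¹ *
        FreeGroup.of GenG.v * FreeGroup.of GenG.b * FreeGroup.of GenG.r *
        (FreeGroup.of GenG.r * (FreeGroup.of GenG.u)⁻¹ * (FreeGroup.of GenG.b)⁻¹ *
        FreeGroup.of GenG.v * FreeGroup.of GenG.b)⁻¹)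
        = mU⁻¹ * mB⁻¹ * mV * mB * 1 * (1 * mU⁻¹ * mB⁻¹ * mV * mB)⁻¹ := by simp [fG]
    rw [this]
    group

def ρ : G →* SL2 := PresentedGroup.toGroup hrels

lemma ofU : ρ (PresentedGroup.of GenG.u) = mU := PresentedGroup.toGroup.of hrels
lemma ofV : ρ (PresentedGroup.of GenG.v) = mV := PresentedGroup.toGroup.of hrels
lemma ofB : ρ (PresentedGroup.of GenG.b) = mB := PresentedGroup.toGroup.of hrels

lemma rho_h1 : ρ h₁ = s₁ := by
  show ρ (PresentedGroup.of GenG.u ^ 2) = s₁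
  refine (map_pow ρ _ 2).trans ?_
  rw [ofU, sq]
  exact e_s₁

lemma rho_h2 : ρ h₂ = s₂ := by
  show ρ (PresentedGroup.of GenG.b * PresentedGroup.of GenG.v *
    PresentedGroup.of GenG.b * PresentedGroup.of GenG.u) = s₂
  have key : ∀ x y z w : G, ρ (x * y * z * w) = ρ x * ρ y * ρ z * ρ w := by
    intro x y z w; simp only [map_mul]
  refine (key _ _ _ _).trans ?_
  rw [ofU, ofV, ofB]
  exact e_s₂

end PingPongAux

/-- The elements u² and bvbu freely generate the subgroup H = ⟨u², bvbu⟩ of G: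
the homomorphism from the free group of rank 2 to G sending the two free generators
to u² and bvbu is injective, and its image is H, so H is free of rank 2. -/
theorem H_is_free_of_rank_two :
    Function.Injective (FreeGroup.lift (![h₁, h₂] : Fin 2 → G)) ∧
      (FreeGroup.lift (![h₁, h₂] : Fin 2 → G)).range = Subgroup.closure {h₁, h₂} := by
  constructor
  · have hcomp : (FreeGroup.lift (![s₁, s₂] : Fin 2 → SL2))
        = ρ.comp (FreeGroup.lift (![h₁, h₂] : Fin 2 → G)) := by
      apply FreeGroup.ext_hom
      intro i
      fin_cases i <;> simp [rho_h1, rho_h2]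
    have hinj : Function.Injective (⇑ρ ∘ ⇑(FreeGroup.lift (![h₁, h₂] : Fin 2 → G))) := by
      rw [← MonoidHom.coe_comp, ← hcomp]; exact inj_s
    exact Function.Injective.of_comp hinj
  · have hr : Set.range (![h₁, h₂] : Fin 2 → G) = ({h₁, h₂} : Set G) := by
      ext g
      constructor
      · rintro ⟨i, rfl⟩
        fin_cases i
        · exact Set.mem_insert _ _
        · exact Set.mem_insert_iff.mpr (Or.inr rfl)
      · intro hg
        simp only [Set.mem_insert_iff, Set.mem_singleton_iff] at hg
        rcases hg with rfl | rfl
        · exact ⟨0, rfl⟩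
        · exact ⟨1, rfl⟩
    rw [FreeGroup.range_lift_eq_closure, hr]
end
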